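/- Let X ⊂ ℝ^d be a compact convex set with nonempty interior, let Q ⊂ ℝ^d be a compact convex set, let a ≤ b be real numbers, and let K be the set of all convex functions u : X → ℝ such that a ≤ u(x) ≤ b for all x ∈ X and such that every subgradient of u at every interior point of X lies in Q. Then K is a convex and compact subset of the space C(X) of continuous functions on X equipped with the supremum norm. -/

import Mathlib

/-!
For convex `u`, every subgradient at an interior point lies in the closed convex set `Q` if and
only if `u y - u x ≤ ⟪y - x, q⟫` for some `q ∈ Q`, for all interior `x, y`: one direction uses a
subgradient at `y`, the other separates a subgradient outside `Q` from `Q` and tests the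
inequality at `y = x + t v` for the separating direction `v`. This increment condition is visibly
stable under convex combinations and, `Q` being compact, under pointwise limits; it also makes
every admissible function `sup_{q ∈ Q} ‖q‖`-Lipschitz, so Arzelà–Ascoli applies.
-/

open Filter Topology Set InnerProductSpace
open scoped NNReal RealInnerProductSpace BoundedContinuousFunction

section General

variable {α F : Type*} [TopologicalSpace α] [AddCommGroup F] [Module ℝ F]

lemma isOpen_strictEpigraph {s : Set α} {u : α → ℝ} (hs : IsOpen s) (hu : ContinuousOn u s) :
    IsOpen {p : α × ℝ | p.1 ∈ s ∧ u p.1 < p.2} := by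
  have h := ((hu.comp continuousOn_fst fun p hp => hp.1).prodMk
    continuousOn_snd).isOpen_inter_preimage (hs.prod isOpen_univ)
    (isOpen_lt continuous_fst continuous_snd)
  convert h using 1
  ext p
  simp

lemma ConvexOn.of_tendsto {ι : Type*} {l : Filter ι} [l.NeBot] {s : Set F} {u : ι → F → ℝ}
    {v : F → ℝ} (hs : Convex ℝ s) (h : ∀ i, ConvexOn ℝ s (u i))
    (hlim : ∀ x ∈ s, Tendsto (fun i => u i x) l (𝓝 (v x))) : ConvexOn ℝ s v := by
  refine ⟨hs, fun x hx y hy α β hα hβ hαβ => ?_⟩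
  exact le_of_tendsto_of_tendsto' (hlim _ (hs hx hy hα hβ hαβ))
    (((hlim x hx).const_mul α).add ((hlim y hy).const_mul β)) fun i => (h i).2 hx hy hα hβ hαβ

end General

variable {E : Type*} [NormedAddCommGroup E] [InnerProductSpace ℝ E]
  {X Q s : Set E} {u : E → ℝ} {x g : E}

def HasSubgradientWithinAt (u : E → ℝ) (g : E) (X : Set E) (x : E) : Prop :=
  ∀ y ∈ X, u x + ⟪y - x, g⟫_ℝ ≤ u y

def IncrementsBoundedBy (Q s : Set E) (u : E → ℝ) : Prop :=
  ∀ x ∈ s, ∀ y ∈ s, ∃ q ∈ Q, u y - u x ≤ ⟪y - x, q⟫_ℝ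

namespace HasSubgradientWithinAt

lemma sub_le_inner {y : E} (hg : HasSubgradientWithinAt u g X y) (hx : x ∈ X) :
    u y - u x ≤ ⟪y - x, g⟫_ℝ := by
  have h := hg x hx
  rw [← neg_sub y x, inner_neg_left] at h
  linarith

lemma of_interior (hu : ConvexOn ℝ X u) (hx : x ∈ interior X)
    (hg : HasSubgradientWithinAt u g (interior X) x) : HasSubgradientWithinAt u g X x := by
  intro y hy
  have hmid : (1 / 2 : ℝ) • x + (1 / 2 : ℝ) • y ∈ interior X :=
    hu.1.combo_interior_closure_mem_interior hx (subset_closure hy) (by norm_num) (by norm_num)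
      (by norm_num)
  have hsub := hg _ hmid
  have hconv := hu.2 (interior_subset hx) hy (by norm_num : (0 : ℝ) ≤ 1 / 2)
    (by norm_num : (0 : ℝ) ≤ 1 / 2) (by norm_num)
  rw [show (1 / 2 : ℝ) • x + (1 / 2 : ℝ) • y - x = (1 / 2 : ℝ) • (y - x) by module,
    real_inner_smul_left] at hsub
  simp only [smul_eq_mul] at hconv
  linarith

lemma mem_of_incrementsBoundedBy [CompleteSpace E] (hQ : IsClosed Q) (hQc : Convex ℝ Q)
    (hx : x ∈ interior X) (hg : HasSubgradientWithinAt u g X x)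
    (hb : ∀ y ∈ interior X, ∃ q ∈ Q, u y - u x ≤ ⟪y - x, q⟫_ℝ) : g ∈ Q := by
  by_contra hgQ
  obtain ⟨f, c, hfQ, hfg⟩ := geometric_hahn_banach_closed_point hQc hQ hgQ
  set v := (toDual ℝ E).symm f
  have hv : ∀ z, ⟪v, z⟫_ℝ = f z := fun z => toDual_symm_apply
  have hnear : ∀ᶠ t in 𝓝[>] (0 : ℝ), x + t • v ∈ interior X := by
    have hcont : Tendsto (fun t : ℝ => x + t • v) (𝓝 0) (𝓝 x) :=
      Continuous.tendsto' (by fun_prop) 0 x (by simp)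
    exact (hcont.mono_left nhdsWithin_le_nhds).eventually (isOpen_interior.mem_nhds hx)
  obtain ⟨t, hy, ht⟩ := (hnear.and self_mem_nhdsWithin).exists
  obtain ⟨q, hq, hle⟩ := hb _ hy
  have hge := hg _ (interior_subset hy)
  rw [add_sub_cancel_left, real_inner_smul_left, hv] at hle hge
  nlinarith [mul_pos (show (0 : ℝ) < t from ht) (sub_pos.2 ((hfQ q hq).trans hfg))]

end HasSubgradientWithinAt

/-- Separate `(x, u x)` from the open convex strict epigraph of `u` over `interior X` by a
functional `f (z, t) = L z + c t`; then `c > 0` and `-c⁻¹ L` is a subgradient. -/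
theorem ConvexOn.exists_hasSubgradientWithinAt_interior [CompleteSpace E] (hu : ConvexOn ℝ X u)
    (hc : ContinuousOn u (interior X)) (hx : x ∈ interior X) :
    ∃ g, HasSubgradientWithinAt u g (interior X) x := by
  set S := {p : E × ℝ | p.1 ∈ interior X ∧ u p.1 < p.2}
  have hS : Convex ℝ S := (hu.subset interior_subset hu.1.interior).convex_strict_epigraph
  obtain ⟨f, hf⟩ := geometric_hahn_banach_point_open hS (isOpen_strictEpigraph isOpen_interior hc)
    (fun h => lt_irrefl _ h.2 : (x, u x) ∉ S)
  set L := f.comp (ContinuousLinearMap.inl ℝ E ℝ)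
  set c := f (0, 1)
  have hf_apply : ∀ z t, f (z, t) = L z + t * c := by
    intro z t
    rw [show (z, t) = (z, (0 : ℝ)) + t • ((0 : E), (1 : ℝ)) by simp, map_add, map_smul,
      smul_eq_mul]
    rfl
  have hc : 0 < c := by
    have h := hf (x, u x + 1) ⟨hx, lt_add_one _⟩
    rw [hf_apply, hf_apply] at h
    linarith
  have hL : ∀ z ∈ interior X, L x + u x * c ≤ L z + u z * c := by
    intro z hz
    refine le_of_forall_pos_lt_add fun ε hε => ?_
    have h := hf (z, u z + ε / c) ⟨hz, lt_add_of_pos_right _ (div_pos hε hc)⟩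
    rw [hf_apply, hf_apply, add_mul, div_mul_cancel₀ _ hc.ne'] at h
    linarith
  refine ⟨(toDual ℝ E).symm (-c⁻¹ • L), fun z hz => ?_⟩
  rw [real_inner_comm, toDual_symm_apply, ← sub_nonneg]
  have key : u z - (u x + (-c⁻¹ • L) (z - x)) = c⁻¹ * (L z + u z * c - (L x + u x * c)) := by
    simp only [smul_apply, map_sub, smul_eq_mul]
    field_simp
    ring
  rw [key]
  exact mul_nonneg (inv_nonneg.2 hc.le) (sub_nonneg.2 (hL z hz))

theorem ConvexOn.forall_hasSubgradientWithinAt_mem_iff [FiniteDimensional ℝ E]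
    (hu : ConvexOn ℝ X u) (hQ : IsClosed Q) (hQc : Convex ℝ Q) :
    (∀ x ∈ interior X, ∀ g, HasSubgradientWithinAt u g X x → g ∈ Q) ↔
      IncrementsBoundedBy Q (interior X) u := by
  refine ⟨fun h x hx y hy => ?_,
    fun h x hx g hg => hg.mem_of_incrementsBoundedBy hQ hQc hx (h x hx)⟩
  obtain ⟨g, hg⟩ := hu.exists_hasSubgradientWithinAt_interior hu.continuousOn_interior hy
  have hg := hg.of_interior hu hy
  exact ⟨g, h y hy g hg, hg.sub_le_inner (interior_subset hx)⟩

namespace IncrementsBoundedBy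

variable {u₁ u₂ : E → ℝ} {α β : ℝ}

lemma smul_add_smul (hQ : Convex ℝ Q) (h₁ : IncrementsBoundedBy Q s u₁)
    (h₂ : IncrementsBoundedBy Q s u₂) (hα : 0 ≤ α) (hβ : 0 ≤ β) (hαβ : α + β = 1) :
    IncrementsBoundedBy Q s (α • u₁ + β • u₂) := by
  intro x hx y hy
  obtain ⟨q₁, hq₁, hle₁⟩ := h₁ x hx y hy
  obtain ⟨q₂, hq₂, hle₂⟩ := h₂ x hx y hy
  refine ⟨α • q₁ + β • q₂, hQ hq₁ hq₂ hα hβ hαβ, ?_⟩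
  simp only [Pi.add_apply, Pi.smul_apply, smul_eq_mul, inner_add_right, real_inner_smul_right]
  nlinarith [mul_le_mul_of_nonneg_left hle₁ hα, mul_le_mul_of_nonneg_left hle₂ hβ]

lemma of_tendsto {ι : Type*} {l : Filter ι} [l.NeBot] {u : ι → E → ℝ} {v : E → ℝ}
    (hQ : IsCompact Q) (h : ∀ i, IncrementsBoundedBy Q s (u i))
    (hlim : ∀ x ∈ s, Tendsto (fun i => u i x) l (𝓝 (v x))) : IncrementsBoundedBy Q s v := by
  intro x hx y hy
  obtain ⟨i⟩ := l.nonempty_of_neBot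
  obtain ⟨q₀, hq₀, -⟩ := h i x hx y hy
  obtain ⟨q, hq, hmax⟩ := hQ.exists_isMaxOn ⟨q₀, hq₀⟩
    (continuous_const.inner continuous_id : Continuous fun q => ⟪y - x, q⟫_ℝ).continuousOn
  refine ⟨q, hq, le_of_tendsto' ((hlim y hy).sub (hlim x hx)) fun i => ?_⟩
  obtain ⟨qi, hqi, hle⟩ := h i x hx y hy
  exact hle.trans (hmax hqi)

lemma lipschitzOnWith {M : ℝ≥0} (hM : ∀ q ∈ Q, ‖q‖ ≤ M) (h : IncrementsBoundedBy Q s u) :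
    LipschitzOnWith M u s := by
  refine LipschitzOnWith.of_le_add_mul M fun x hx y hy => ?_
  obtain ⟨q, hq, hle⟩ := h y hy x hx
  have := (real_inner_le_norm (x - y) q).trans
    (mul_le_mul_of_nonneg_left (hM q hq) (norm_nonneg _))
  rw [dist_eq_norm]
  linarith

end IncrementsBoundedBy

def admissibleUtilities (X Q : Set E) (a b : ℝ) : Set (X →ᵇ ℝ) :=
  {f | ∃ u : E → ℝ, ConvexOn ℝ X u ∧ (∀ x ∈ X, a ≤ u x ∧ u x ≤ b) ∧
    (∀ x ∈ interior X, ∀ g, HasSubgradientWithinAt u g X x → g ∈ Q) ∧ ∀ x : X, f x = u x}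

section admissibleUtilities

variable [FiniteDimensional ℝ E] {a b : ℝ}

lemma mem_admissibleUtilities_iff (hQ : IsClosed Q) (hQc : Convex ℝ Q) {f : X →ᵇ ℝ} :
    f ∈ admissibleUtilities X Q a b ↔ ∃ u : E → ℝ, ConvexOn ℝ X u ∧ (∀ x ∈ X, u x ∈ Icc a b) ∧
      IncrementsBoundedBy Q (interior X) u ∧ ∀ x : X, f x = u x := by
  refine exists_congr fun u => ⟨fun ⟨hu, hab, hQu, hfu⟩ => ?_, fun ⟨hu, hab, hQu, hfu⟩ => ?_⟩
  · exact ⟨hu, hab, (hu.forall_hasSubgradientWithinAt_mem_iff hQ hQc).1 hQu, hfu⟩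
  · exact ⟨hu, hab, (hu.forall_hasSubgradientWithinAt_mem_iff hQ hQc).2 hQu, hfu⟩

lemma convex_admissibleUtilities (hQ : IsClosed Q) (hQc : Convex ℝ Q) :
    Convex ℝ (admissibleUtilities X Q a b) := by
  intro f₁ hf₁ f₂ hf₂ α β hα hβ hαβ
  obtain ⟨u₁, hu₁, hab₁, hQ₁, hfu₁⟩ := (mem_admissibleUtilities_iff hQ hQc).1 hf₁
  obtain ⟨u₂, hu₂, hab₂, hQ₂, hfu₂⟩ := (mem_admissibleUtilities_iff hQ hQc).1 hf₂
  refine (mem_admissibleUtilities_iff hQ hQc).2 ⟨α • u₁ + β • u₂, (hu₁.smul hα).add (hu₂.smul hβ),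
    fun x hx => convex_Icc a b (hab₁ x hx) (hab₂ x hx) hα hβ hαβ,
    hQ₁.smul_add_smul hQc hQ₂ hα hβ hαβ, fun x => ?_⟩
  simp [hfu₁ x, hfu₂ x]

lemma isClosed_admissibleUtilities (hQ : IsCompact Q) (hQc : Convex ℝ Q) (hX : Convex ℝ X) :
    IsClosed (admissibleUtilities X Q a b) := by
  refine isClosed_of_closure_subset fun f hf => ?_
  obtain ⟨fs, hfs, hlim⟩ := mem_closure_iff_seq_limit.1 hf
  choose u hu hab hQu hfu using fun n => (mem_admissibleUtilities_iff hQ.isClosed hQc).1 (hfs n)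
  classical
  set v : E → ℝ := fun y => if hy : y ∈ X then f ⟨y, hy⟩ else 0
  have hfv : ∀ x : X, f x = v x := fun x => by simp [v]
  have hulim : ∀ x ∈ X, Tendsto (fun n => u n x) atTop (𝓝 (v x)) := fun x hx => by
    simpa [Function.comp_def, hfu, hfv] using
      ((continuous_eval_const (⟨x, hx⟩ : X)).tendsto f).comp hlim
  refine (mem_admissibleUtilities_iff hQ.isClosed hQc).2 ⟨v, ConvexOn.of_tendsto hX hu hulim,
    fun x hx => isClosed_Icc.mem_of_tendsto (hulim x hx) (.of_forall fun n => hab n x hx),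
    .of_tendsto hQ hQu fun x hx => hulim x (interior_subset hx), hfv⟩

lemma lipschitzWith_of_mem_admissibleUtilities (hXc : IsClosed X) (hX : Convex ℝ X)
    (hXint : (interior X).Nonempty) (hQ : IsClosed Q) (hQc : Convex ℝ Q) {M : ℝ≥0}
    (hM : ∀ q ∈ Q, ‖q‖ ≤ M) {f : X →ᵇ ℝ} (hf : f ∈ admissibleUtilities X Q a b) :
    LipschitzWith M f := by
  obtain ⟨u, -, -, hQu, hfu⟩ := (mem_admissibleUtilities_iff hQ hQc).1 hf
  have hXeq : closure (interior X) = X := by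
    rw [hX.closure_interior_eq_closure_of_nonempty_interior hXint, hXc.closure_eq]
  have hfu' : (f : X → ℝ) = X.domRestrict u := funext hfu
  have hcont : ContinuousOn u X := by
    rw [continuousOn_iff_continuous_domRestrict, ← hfu']
    exact f.continuous
  rw [hfu']
  exact (hXeq ▸ (hQu.lipschitzOnWith hM).closure (hXeq ▸ hcont)).to_restrict

lemma isCompact_admissibleUtilities (hXc : IsCompact X) (hX : Convex ℝ X)
    (hXint : (interior X).Nonempty) (hQ : IsCompact Q) (hQc : Convex ℝ Q) :
    IsCompact (admissibleUtilities X Q a b) := by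
  have := isCompact_iff_compactSpace.1 hXc
  obtain ⟨C, hC⟩ := hQ.isBounded.exists_norm_le
  have hM : ∀ q ∈ Q, ‖q‖ ≤ C.toNNReal := fun q hq => (hC q hq).trans (Real.le_coe_toNNReal C)
  refine BoundedContinuousFunction.arzela_ascoli₂ (Icc a b) isCompact_Icc _
    (isClosed_admissibleUtilities hQ hQc hX) (fun f x ⟨u, _, hab, _, hfu⟩ => hfu x ▸ hab x x.2) ?_
  have hlip (f : admissibleUtilities X Q a b) : LipschitzWith C.toNNReal ⇑(f : X →ᵇ ℝ) :=
    lipschitzWith_of_mem_admissibleUtilities hXc.isClosed hX hXint hQ.isClosed hQc hM f.2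
  exact (LipschitzWith.uniformEquicontinuous _ _ hlip).equicontinuous

end admissibleUtilities

theorem admissible_utilities_convex_compact_general (d : ℕ)
    (X Q : Set (EuclideanSpace ℝ (Fin d)))
    (hXc : IsCompact X) (hXconv : Convex ℝ X) (hXint : (interior X).Nonempty)
    (hQc : IsCompact Q) (hQconv : Convex ℝ Q)
    (a b : ℝ)
    (K : Set (BoundedContinuousFunction X ℝ))
    (hK : ∀ f : BoundedContinuousFunction X ℝ,
      f ∈ K ↔ ∃ u : EuclideanSpace ℝ (Fin d) → ℝ,
        ConvexOn ℝ X u ∧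
        (∀ x ∈ X, a ≤ u x ∧ u x ≤ b) ∧
        (∀ x ∈ interior X, ∀ g : EuclideanSpace ℝ (Fin d),
          (∀ y ∈ X, u x + (inner ℝ (y - x) g : ℝ) ≤ u y) → g ∈ Q) ∧
        (∀ x : X, f x = u x)) :
    Convex ℝ K ∧ IsCompact K := by
  obtain rfl : K = admissibleUtilities X Q a b := Set.ext hK
  exact ⟨convex_admissibleUtilities hQc.isClosed hQconv,
    isCompact_admissibleUtilities hXc hXconv hXint hQc hQconv⟩

/-- The set `K` of admissible (convex, bounded, with subgradients in a compact convex
set `Q`) utility functions is a convex and compact subset of the space of continuous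
functions on the compact convex set `X`, equipped with the supremum norm (here realized
by the bounded continuous functions on `X`). -/
theorem admissible_utilities_convex_compact (d : ℕ)
    (X Q : Set (EuclideanSpace ℝ (Fin d)))
    (hXc : IsCompact X) (hXconv : Convex ℝ X) (hXint : (interior X).Nonempty)
    (hQc : IsCompact Q) (hQconv : Convex ℝ Q)
    (a b : ℝ) (hab : a ≤ b)
    (K : Set (BoundedContinuousFunction X ℝ))
    (hK : ∀ f : BoundedContinuousFunction X ℝ,
      f ∈ K ↔ ∃ u : EuclideanSpace ℝ (Fin d) → ℝ,
        ConvexOn ℝ X u ∧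
        (∀ x ∈ X, a ≤ u x ∧ u x ≤ b) ∧
        (∀ x ∈ interior X, ∀ g : EuclideanSpace ℝ (Fin d),
          (∀ y ∈ X, u x + (inner ℝ (y - x) g : ℝ) ≤ u y) → g ∈ Q) ∧
        (∀ x : X, f x = u x)) :
    Convex ℝ K ∧ IsCompact K :=
  admissible_utilities_convex_compact_general d X Q hXc hXconv hXint hQc hQconv a b K hK
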